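/- Let H₁, H₂, K₁, K₂ be closed subspaces of L² and a₁, a₂ ∈ 𝒢L∞ with a₁K₁ = H₁ and a₂K₂ = H₂. If φ, ψ ∈ L∞ satisfy φ = ā₂·ψ·a₁, then T_φ^{K₁,K₂} = E ∘ T_ψ^{H₁,H₂} ∘ F, where E = T_{ā₂}^{H₂,K₂} and F = T_{a₁}^{K₁,H₁} = M_{a₁}|_{K₁}; in particular, E and F are bounded invertible, so T_φ^{K₁,K₂} and T_ψ^{H₁,H₂} are equivalent. -/

import Mathlib

/-!
Since `a₁ K₁ ⊆ H₁`, the compression `T_{a₁}^{K₁,H₁}` is plain multiplication by `a₁`, so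
`T_ψ^{H₁,H₂} T_{a₁}^{K₁,H₁} = T_{ψ a₁}^{K₁,H₂}`. Dually, since `a₂ K₂ ⊆ H₂`, multiplication by `ā₂`
maps `H₂ᗮ` into `K₂ᗮ`, so `T_{ā₂}^{H₂,K₂} P_{H₂} = P_{K₂} M_{ā₂}`; together these give the
factorization. `F` is inverted by `T_{b₁}^{H₁,K₁}`, and `E` is the adjoint of `T_{a₂}^{K₂,H₂}`,
which is inverted by `T_{b₂}^{H₂,K₂}`.
-/

open MeasureTheory

noncomputable section

instance : Fact (0 < 2 * Real.pi) := ⟨by positivity⟩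

/-- The normalized Lebesgue (Haar) measure `dθ/2π` on the circle. -/
abbrev μH : Measure (AddCircle (2 * Real.pi)) := AddCircle.haarAddCircle

/-- The Lebesgue space `L²` of the circle. -/
abbrev L2 : Type := Lp ℂ 2 μH

/-- The space `L∞` of essentially bounded functions on the circle. -/
abbrev Linf : Type := Lp ℂ ⊤ μH

/-- Pointwise (a.e.) multiplication on `L∞`. -/
instance : Mul Linf :=
  ⟨fun f g => ((Lp.memLp g).smul (p := ⊤) (r := ⊤) (Lp.memLp f)).toLp (⇑f • ⇑g)⟩

/-- The constant function `1` as an element of `L∞`. -/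
instance : One Linf := ⟨(memLp_const (1 : ℂ)).toLp (fun _ => (1 : ℂ))⟩

/-- Complex conjugation on `L∞`. -/
instance : Star Linf :=
  ⟨fun f => ((Complex.conjCLE.toContinuousLinearMap).comp_memLp' (Lp.memLp f)).toLp
    ((starRingEnd ℂ) ∘ ⇑f)⟩

/-- Multiplication of an `L²` function by an `L∞` function. -/
def mulFun (φ : Linf) (f : L2) : L2 :=
  ((Lp.memLp f).smul (p := ⊤) (r := 2) (Lp.memLp φ)).toLp (⇑φ • ⇑f)

lemma mulFun_coe (φ : Linf) (f : L2) : mulFun φ f =ᵐ[μH] ⇑φ • ⇑f :=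
  MemLp.coeFn_toLp _

lemma mulFun_norm_le (φ : Linf) (f : L2) : ‖mulFun φ f‖ ≤ ‖φ‖ * ‖f‖ := by
  rw [mulFun, Lp.norm_toLp, Lp.norm_def, Lp.norm_def, ← ENNReal.toReal_mul]
  refine ENNReal.toReal_mono ?_ ?_
  · exact ENNReal.mul_ne_top (Lp.eLpNorm_ne_top φ) (Lp.eLpNorm_ne_top f)
  · exact eLpNorm_smul_le_eLpNorm_top_mul_eLpNorm 2 (Lp.aestronglyMeasurable f) ⇑φ

/-- The bounded multiplication operator `M_φ : L² → L²` for `φ ∈ L∞`. -/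
def mulCLM (φ : Linf) : L2 →L[ℂ] L2 :=
  LinearMap.mkContinuous
    { toFun := mulFun φ
      map_add' := by
        intro f g
        apply Lp.ext
        filter_upwards [mulFun_coe φ (f + g), mulFun_coe φ f, mulFun_coe φ g,
          Lp.coeFn_add f g, Lp.coeFn_add (mulFun φ f) (mulFun φ g)] with x h1 h2 h3 h4 h5
        simp only [Pi.smul_apply', Pi.add_apply] at *
        rw [h1, h5, h2, h3, h4]
        exact smul_add _ _ _
      map_smul' := by
        intro c f
        apply Lp.ext
        filter_upwards [mulFun_coe φ (c • f), mulFun_coe φ f,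
          Lp.coeFn_smul c f, Lp.coeFn_smul c (mulFun φ f)] with x h1 h2 h3 h4
        simp only [Pi.smul_apply', Pi.smul_apply, RingHom.id_apply] at *
        rw [h1, h4, h2, h3]
        exact smul_comm _ _ _ }
    ‖φ‖ (mulFun_norm_le φ)

/-- The image `a·K = {a f : f ∈ K}` of a subspace `K ⊆ L²` under multiplication by `a ∈ L∞`. -/
def smulSub (a : Linf) (K : Submodule ℂ L2) : Submodule ℂ L2 :=
  K.map (mulCLM a : L2 →ₗ[ℂ] L2)

/-- The Hardy space `H² = {f ∈ L² : f̂(n) = 0 for n < 0}`. -/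
def Hardy : Submodule ℂ L2 where
  carrier := {f | ∀ n : ℤ, n < 0 → fourierBasis.repr f n = 0}
  add_mem' := by
    intro f g hf hg n hn
    rw [map_add, lp.coeFn_add, Pi.add_apply, hf n hn, hg n hn, add_zero]
  zero_mem' := by
    intro n hn
    rw [map_zero, lp.coeFn_zero]
    rfl
  smul_mem' := by
    intro c f hf n hn
    rw [_root_.map_smul, lp.coeFn_smul, Pi.smul_apply, hf n hn, smul_zero]

lemma hardy_isClosed : IsClosed (Hardy : Set L2) := by
  have h : (Hardy : Set L2) =
      ⋂ n : {m : ℤ // m < 0}, {f : L2 | fourierBasis.repr f n.1 = 0} := by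
    ext f
    constructor
    · intro hf
      exact Set.mem_iInter.2 fun n => hf n.1 n.2
    · intro hf n hn
      exact Set.mem_iInter.1 hf ⟨n, hn⟩
  rw [h]
  refine isClosed_iInter fun n => isClosed_eq ?_ continuous_const
  have : (fun f : L2 => fourierBasis.repr f n.1) =
      fun f : L2 => (innerSL ℂ (fourierBasis n.1)) f := by
    funext f
    exact fourierBasis.repr_apply_apply f n.1
  rw [this]
  exact (innerSL ℂ (fourierBasis n.1)).continuous

instance : CompleteSpace Hardy := hardy_isClosed.completeSpace_coe

/-- The model space `K_θ = H² ⊖ θH² = H² ∩ (θH²)^⊥`. -/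
def modelSpace (θ : Linf) : Submodule ℂ L2 :=
  Hardy ⊓ (smulSub θ Hardy)ᗮ

instance (θ : Linf) : CompleteSpace (modelSpace θ) := by
  suffices hc : IsClosed (modelSpace θ : Set L2) from hc.completeSpace_coe
  have h : (modelSpace θ : Set L2) = (Hardy : Set L2) ∩ ((smulSub θ Hardy)ᗮ : Set L2) := rfl
  rw [h]
  exact hardy_isClosed.inter (smulSub θ Hardy).isClosed_orthogonal

/-- The generalized Toeplitz operator `T_φ^{H₁,H₂} = P_{H₂} M_φ |_{H₁}`. -/
def genToeplitz (φ : Linf) (H₁ H₂ : Submodule ℂ L2) [CompleteSpace H₂] : H₁ →L[ℂ] H₂ :=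
  H₂.orthogonalProjectionOnto.comp ((mulCLM φ).comp H₁.subtypeL)

/-- The orthogonal projection of `L²` onto `H`, viewed as an operator `L² → L²`. -/
def projL (H : Submodule ℂ L2) [CompleteSpace H] : L2 →L[ℂ] L2 :=
  H.subtypeL.comp H.orthogonalProjectionOnto

/-- `φ ∈ H∞`: all negative Fourier coefficients of `φ` vanish. -/
def IsHardyInf (φ : Linf) : Prop := ∀ n : ℤ, n < 0 → fourierCoeff (⇑φ) n = 0

/-- `θ` is an inner function: `θ ∈ H∞` and `|θ| = 1` a.e. on the circle. -/
def IsInner (θ : Linf) : Prop :=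
  IsHardyInf θ ∧ ∀ᵐ x ∂μH, ‖(θ : AddCircle (2 * Real.pi) → ℂ) x‖ = 1

/-- `a ∈ 𝒢H∞` with explicit inverse `b ∈ H∞`. -/
def GHinfPair (a b : Linf) : Prop := IsHardyInf a ∧ IsHardyInf b ∧ a * b = 1

/-- `a ∈ 𝒢H∞`: `a` is invertible in the algebra `H∞`. -/
def IsGHinf (a : Linf) : Prop := ∃ b, GHinfPair a b

/-- `b ∈ 𝒢H̄∞`: `b` is the conjugate of an element of `𝒢H∞`. -/
def IsGHinfBar (b : Linf) : Prop := ∃ c, IsGHinf c ∧ b = star c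

/-- `a ∈ 𝒢L∞` with explicit inverse `b`. -/
def GLinfPair (a b : Linf) : Prop := a * b = 1 ∧ b * a = 1

/-- `a ∈ 𝒢L∞`: `a` is invertible in the algebra `L∞`. -/
def IsGLinf (a : Linf) : Prop := ∃ b, GLinfPair a b

/-- The kernel of an operator between subspaces of `L²`, viewed as a subspace of `L²`. -/
def subKer {K₁ K₂ : Submodule ℂ L2} (T : K₁ →L[ℂ] K₂) : Submodule ℂ L2 :=
  (LinearMap.ker (T : K₁ →ₗ[ℂ] K₂)).map K₁.subtype

/-- The range of an operator between subspaces of `L²`, viewed as a subspace of `L²`. -/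
def subRan {K₁ K₂ : Submodule ℂ L2} (T : K₁ →L[ℂ] K₂) : Submodule ℂ L2 :=
  (LinearMap.range (T : K₁ →ₗ[ℂ] K₂)).map K₂.subtype

/-- The image of a subspace `S ⊆ K₁` under `T : K₁ → K₂`, viewed as a subspace of `L²`. -/
def opImage {K₁ K₂ : Submodule ℂ L2} (T : K₁ →L[ℂ] K₂) (S : Submodule ℂ K₁) :
    Submodule ℂ L2 :=
  (S.map (T : K₁ →ₗ[ℂ] K₂)).map K₂.subtype

section Antilinear

variable {E : Type*} [NormedAddCommGroup E] [InnerProductSpace ℂ E]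

/-- `C` is antilinear: `C(f + a g) = C f + ā C g`. -/
def IsAntilinearMap (C : E → E) : Prop :=
  ∀ (f g : E) (a : ℂ), C (f + a • g) = C f + (starRingEnd ℂ a) • C g

/-- `Cs` is the antilinear adjoint of `C`: `⟨C f, g⟩ = conj ⟨f, Cs g⟩`. -/
def IsAntilinearAdjointOf (C Cs : E → E) : Prop :=
  ∀ f g : E, (inner ℂ (C f) g : ℂ) = (starRingEnd ℂ) (inner ℂ f (Cs g) : ℂ)

/-- `C` is an antilinear unitary: it is antilinear and its antilinear adjoint is its inverse. -/
def IsAntilinearUnitary (C : E → E) : Prop :=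
  IsAntilinearMap C ∧ ∃ Cs : E → E, IsAntilinearAdjointOf C Cs ∧
    Function.LeftInverse Cs C ∧ Function.RightInverse Cs C

/-- `T` is complex selfadjoint with respect to `C` (with inverse `Cinv`): `C T C⁻¹ = T*`. -/
def IsComplexSelfadjointWith [CompleteSpace E] (T : E →L[ℂ] E) (C Cinv : E → E) : Prop :=
  ∀ f : E, C (T (Cinv f)) = ContinuousLinearMap.adjoint T f

end Antilinear

lemma Linf.coeFn_mul (a b : Linf) : ⇑(a * b) =ᵐ[μH] ⇑a • ⇑b :=
  MemLp.coeFn_toLp _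

lemma Linf.coeFn_one : ⇑(1 : Linf) =ᵐ[μH] fun _ => (1 : ℂ) :=
  MemLp.coeFn_toLp _

lemma Linf.coeFn_star (a : Linf) : ⇑(star a) =ᵐ[μH] fun x => starRingEnd ℂ (a x) :=
  MemLp.coeFn_toLp _

lemma coeFn_mulCLM (φ : Linf) (f : L2) : ⇑(mulCLM φ f) =ᵐ[μH] ⇑φ • ⇑f :=
  mulFun_coe φ f

lemma mulCLM_mul_apply (a b : Linf) (f : L2) : mulCLM (a * b) f = mulCLM a (mulCLM b f) := by
  apply Lp.ext
  filter_upwards [coeFn_mulCLM (a * b) f, coeFn_mulCLM a (mulCLM b f), coeFn_mulCLM b f,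
    Linf.coeFn_mul a b] with x hab ha hb hmul
  simp only [hab, ha, hb, hmul, Pi.smul_apply', smul_eq_mul, mul_assoc]

lemma mulCLM_one_apply (f : L2) : mulCLM 1 f = f := by
  apply Lp.ext
  filter_upwards [coeFn_mulCLM 1 f, Linf.coeFn_one] with x h h1
  simp [h, h1]

lemma inner_mulCLM_star_left (a : Linf) (f g : L2) :
    inner ℂ (mulCLM (star a) f) g = inner ℂ f (mulCLM a g) := by
  rw [L2.inner_def, L2.inner_def]
  apply integral_congr_ae
  filter_upwards [coeFn_mulCLM (star a) f, coeFn_mulCLM a g, Linf.coeFn_star a]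
    with x hf hg hstar
  rw [hf, hg, Pi.smul_apply', Pi.smul_apply', hstar]
  simp only [RCLike.inner_apply, smul_eq_mul, map_mul, starRingEnd_self_apply]
  ring

lemma inner_mulCLM_star_right (a : Linf) (f g : L2) :
    inner ℂ f (mulCLM (star a) g) = inner ℂ (mulCLM a f) g := by
  rw [← inner_conj_symm, inner_mulCLM_star_left, inner_conj_symm]

lemma mulCLM_mem_of_smulSub_le {a : Linf} {K H : Submodule ℂ L2} (h : smulSub a K ≤ H)
    {f : L2} (hf : f ∈ K) : mulCLM a f ∈ H :=
  h (Submodule.mem_map_of_mem hf)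

lemma smulSub_le_of_smulSub_eq {a b : Linf} (hba : b * a = 1) {K H : Submodule ℂ L2}
    (h : smulSub a K = H) : smulSub b H ≤ K := by
  rw [← h]
  rintro _ ⟨_, ⟨f, hf, rfl⟩, rfl⟩
  show mulCLM b (mulCLM a f) ∈ K
  rwa [← mulCLM_mul_apply, hba, mulCLM_one_apply]

section genToeplitz

variable {K H H' : Submodule ℂ L2}

lemma coe_genToeplitz_of_smulSub_le [CompleteSpace H] {a : Linf} (h : smulSub a K ≤ H)
    (f : K) : (genToeplitz a K H f : L2) = mulCLM a f :=
  congrArg Subtype.val (Submodule.orthogonalProjectionOnto_mem_subspace_eq_self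
    (⟨mulCLM a f, mulCLM_mem_of_smulSub_le h f.2⟩ : H))

lemma genToeplitz_one [CompleteSpace H] : genToeplitz 1 H H = ContinuousLinearMap.id ℂ H := by
  ext f
  simp [genToeplitz, mulCLM_one_apply]

lemma genToeplitz_comp_genToeplitz_of_smulSub_le [CompleteSpace H] [CompleteSpace H']
    {a b : Linf} (h : smulSub b K ≤ H) :
    (genToeplitz a H H').comp (genToeplitz b K H) = genToeplitz (a * b) K H' := by
  ext1 f
  show H'.orthogonalProjectionOnto (mulCLM a (genToeplitz b K H f)) =
    H'.orthogonalProjectionOnto (mulCLM (a * b) f)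
  rw [coe_genToeplitz_of_smulSub_le h, mulCLM_mul_apply]

lemma genToeplitz_comp_genToeplitz_eq_id [CompleteSpace H] [CompleteSpace K] {a b : Linf}
    (hab : a * b = 1) (h : smulSub b K ≤ H) :
    (genToeplitz a H K).comp (genToeplitz b K H) = ContinuousLinearMap.id ℂ K := by
  rw [genToeplitz_comp_genToeplitz_of_smulSub_le h, hab, genToeplitz_one]

lemma genToeplitz_star_comp_genToeplitz_of_smulSub_le [CompleteSpace H] [CompleteSpace K]
    {a : Linf} (h : smulSub a K ≤ H) (ψ : Linf) :
    (genToeplitz (star a) H K).comp (genToeplitz ψ H' H) = genToeplitz (star a * ψ) H' K := by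
  ext1 f
  refine ext_inner_left ℂ fun k => ?_
  let ak : H := ⟨mulCLM a k, mulCLM_mem_of_smulSub_le h k.2⟩
  calc inner ℂ k (genToeplitz (star a) H K (genToeplitz ψ H' H f))
      = inner ℂ (k : L2) (mulCLM (star a) (genToeplitz ψ H' H f)) :=
        Submodule.inner_orthogonalProjectionOnto_eq_of_mem_left k _
    _ = inner ℂ ak (genToeplitz ψ H' H f) := inner_mulCLM_star_right a _ _
    _ = inner ℂ (ak : L2) (mulCLM ψ f) :=
        Submodule.inner_orthogonalProjectionOnto_eq_of_mem_left ak _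
    _ = inner ℂ (k : L2) (mulCLM (star a * ψ) f) := by
        rw [mulCLM_mul_apply, inner_mulCLM_star_right]
    _ = inner ℂ k (genToeplitz (star a * ψ) H' K f) :=
        (Submodule.inner_orthogonalProjectionOnto_eq_of_mem_left k _).symm

lemma adjoint_genToeplitz [CompleteSpace H] [CompleteSpace K] (φ : Linf) :
    ContinuousLinearMap.adjoint (genToeplitz φ H K) = genToeplitz (star φ) K H := by
  refine ((ContinuousLinearMap.eq_adjoint_iff _ _).2 fun g f => ?_).symm
  simp only [genToeplitz, ContinuousLinearMap.comp_apply,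
    Submodule.inner_orthogonalProjectionOnto_eq_of_mem_right,
    Submodule.inner_orthogonalProjectionOnto_eq_of_mem_left]
  exact inner_mulCLM_star_left φ _ _

end genToeplitz

/-- Theorem 2.13: if `a₁K₁ = H₁`, `a₂K₂ = H₂` with `a₁, a₂ ∈ 𝒢L∞`
and `φ = ā₂ ψ a₁`, then `T_φ^{K₁,K₂} = E T_ψ^{H₁,H₂} F` with `E = T_{ā₂}^{H₂,K₂}`,
`F = T_{a₁}^{K₁,H₁} = M_{a₁}|_{K₁}` bounded invertible; hence the two generalized
Toeplitz operators are equivalent. -/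
theorem statement7 (H₁ H₂ K₁ K₂ : Submodule ℂ L2)
    [CompleteSpace H₁] [CompleteSpace H₂] [CompleteSpace K₁] [CompleteSpace K₂]
    (a₁ b₁ a₂ b₂ : Linf) (h₁ : GLinfPair a₁ b₁) (h₂ : GLinfPair a₂ b₂)
    (hK₁ : smulSub a₁ K₁ = H₁) (hK₂ : smulSub a₂ K₂ = H₂)
    (φ ψ : Linf) (hφψ : φ = star a₂ * ψ * a₁) :
    genToeplitz φ K₁ K₂ =
      (genToeplitz (star a₂) H₂ K₂).comp
        ((genToeplitz ψ H₁ H₂).comp (genToeplitz a₁ K₁ H₁)) ∧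
    (∀ f : K₁, (genToeplitz a₁ K₁ H₁ f : L2) = mulCLM a₁ (f : L2)) ∧
    (∃ E' : K₂ →L[ℂ] H₂,
      (genToeplitz (star a₂) H₂ K₂).comp E' = ContinuousLinearMap.id ℂ K₂ ∧
      E'.comp (genToeplitz (star a₂) H₂ K₂) = ContinuousLinearMap.id ℂ H₂) ∧
    (∃ F' : H₁ →L[ℂ] K₁,
      (genToeplitz a₁ K₁ H₁).comp F' = ContinuousLinearMap.id ℂ H₁ ∧
      F'.comp (genToeplitz a₁ K₁ H₁) = ContinuousLinearMap.id ℂ K₁) := by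
  obtain ⟨hab₁, hba₁⟩ := h₁
  obtain ⟨hab₂, hba₂⟩ := h₂
  have hF₁ := genToeplitz_comp_genToeplitz_eq_id hab₁ (smulSub_le_of_smulSub_eq hba₁ hK₁)
  have hG₁ := genToeplitz_comp_genToeplitz_eq_id hba₁ hK₁.le
  have hF₂ := genToeplitz_comp_genToeplitz_eq_id hab₂ (smulSub_le_of_smulSub_eq hba₂ hK₂)
  have hG₂ := genToeplitz_comp_genToeplitz_eq_id hba₂ hK₂.le
  refine ⟨?_, coe_genToeplitz_of_smulSub_le hK₁.le,
    ⟨ContinuousLinearMap.adjoint (genToeplitz b₂ H₂ K₂), ?_, ?_⟩, ⟨genToeplitz b₁ H₁ K₁, hF₁, hG₁⟩⟩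
  · rw [← ContinuousLinearMap.comp_assoc, genToeplitz_star_comp_genToeplitz_of_smulSub_le hK₂.le,
      genToeplitz_comp_genToeplitz_of_smulSub_le hK₁.le, hφψ]
  · rw [← adjoint_genToeplitz, ← ContinuousLinearMap.adjoint_comp, hG₂,
      ContinuousLinearMap.adjoint_id]
  · rw [← adjoint_genToeplitz, ← ContinuousLinearMap.adjoint_comp, hF₂,
      ContinuousLinearMap.adjoint_id]
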